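/- If κ := 1 + β - α < 0, with α, β > 0, then the series ∑_{r=0}^∞ Γ(αr + a)/Γ(βr + b) · z^r/r! diverges for every nonzero complex z. -/

import Mathlib

/-!
Write `A = αr + a` and `B = βr + b`. Peeling `N = ⌊Re A⌋ - 1` factors off `Γ(A)` with
`Γ(w + 1) = w Γ(w)`, and bounding `‖Γ‖` below on the compact segment `Re w ∈ [1, 2]`,
`Im w = Im a`, gives `‖Γ(A)‖ ≥ m N!`; on the other side `‖Γ(B)‖ ≤ Γ(Re B) ≤ U!` with
`U = ⌊Re B⌋`. Since `α > β + 1`, `N = U + r + d` with `d ≥ (α - β - 1) r / 2`, so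
`N! ≥ U! r! r^d`, and `r^d ‖z‖^r ≥ 1` for large `r`: the terms stay above `m`.
-/

open Complex Filter Set
open scoped Nat

namespace Complex

lemma norm_Gamma_le_Gamma_re {s : ℂ} (hs : 0 < s.re) : ‖Gamma s‖ ≤ Real.Gamma s.re := by
  rw [Gamma_eq_integral hs, Real.Gamma_eq_integral hs, GammaIntegral]
  refine (MeasureTheory.norm_integral_le_integral_norm _).trans_eq ?_
  refine MeasureTheory.setIntegral_congr_fun measurableSet_Ioi fun x hx => ?_
  rw [norm_mul, norm_cpow_eq_rpow_re_of_pos hx, norm_real, Real.norm_of_nonneg (Real.exp_pos _).le,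
    sub_re, one_re]

lemma norm_Gamma_le_factorial_natFloor {s : ℂ} (hs : 2 ≤ s.re) : ‖Gamma s‖ ≤ (⌊s.re⌋₊)! := by
  have hfloor : s.re ≤ ⌊s.re⌋₊ + 1 := (Nat.lt_floor_add_one _).le
  calc ‖Gamma s‖ ≤ Real.Gamma s.re := norm_Gamma_le_Gamma_re (by linarith)
    _ ≤ Real.Gamma (⌊s.re⌋₊ + 1) :=
      Real.Gamma_strictMonoOn_Ici.monotoneOn hs (hs.trans hfloor) hfloor
    _ = (⌊s.re⌋₊)! := Real.Gamma_nat_eq_factorial _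

lemma factorial_mul_norm_Gamma_le_norm_Gamma_add {w : ℂ} (hw : 1 ≤ w.re) (n : ℕ) :
    n ! * ‖Gamma w‖ ≤ ‖Gamma (w + n)‖ := by
  induction n with
  | zero => simp
  | succ n ih =>
    have hre : (w + n).re = w.re + n := by simp
    have hnorm : (n : ℝ) + 1 ≤ ‖w + n‖ := by linarith [re_le_norm (w + n)]
    have hne : w + n ≠ 0 := norm_pos_iff.mp (by linarith)
    calc ((n + 1)! : ℝ) * ‖Gamma w‖ = (n + 1) * (n ! * ‖Gamma w‖) := by
          push_cast [Nat.factorial_succ]; ring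
      _ ≤ ‖w + n‖ * ‖Gamma (w + n)‖ := by gcongr
      _ = ‖Gamma (w + (n + 1 : ℕ))‖ := by
        rw [← norm_mul, ← Gamma_add_one _ hne]; push_cast; ring_nf

lemma ne_neg_natCast_of_re_pos {s : ℂ} (hs : 0 < s.re) (k : ℕ) : s ≠ -k := by
  rintro rfl
  simp only [neg_re, natCast_re, Left.neg_pos_iff] at hs
  linarith [k.cast_nonneg (α := ℝ)]

lemma exists_pos_le_norm_Gamma_add_mul_I (t : ℝ) :
    ∃ m > 0, ∀ c ∈ Icc (1 : ℝ) 2, m ≤ ‖Gamma (c + t * I)‖ := by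
  have hre : ∀ c ∈ Icc (1 : ℝ) 2, 0 < ((c : ℂ) + t * I).re := fun c hc => by
    simpa using zero_lt_one.trans_le hc.1
  have hcont : ContinuousOn (fun c : ℝ => ‖Gamma (c + t * I)‖) (Icc 1 2) := fun c hc =>
    ((differentiableAt_Gamma _ (ne_neg_natCast_of_re_pos (hre c hc))).continuousAt.comp (x := c)
      (by fun_prop)).norm.continuousWithinAt
  obtain ⟨c₀, hc₀, hmin⟩ := isCompact_Icc.exists_isMinOn (nonempty_Icc.mpr one_le_two) hcont
  exact ⟨_, norm_pos_iff.mpr (Gamma_ne_zero_of_re_pos (hre c₀ hc₀)), fun c hc => hmin hc⟩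

lemma exists_pos_mul_factorial_le_norm_Gamma (t : ℝ) :
    ∃ m > 0, ∀ s : ℂ, s.im = t → 1 ≤ s.re → m * (⌊s.re⌋₊ - 1)! ≤ ‖Gamma s‖ := by
  obtain ⟨m, hm, hmin⟩ := exists_pos_le_norm_Gamma_add_mul_I t
  refine ⟨m, hm, fun s hs hre => ?_⟩
  set n := ⌊s.re⌋₊ - 1
  have hn : (n : ℝ) = ⌊s.re⌋₊ - 1 := by
    rw [Nat.cast_sub (Nat.one_le_floor_iff _ |>.mpr hre), Nat.cast_one]
  have hw : (s - n).re ∈ Icc (1 : ℝ) 2 := by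
    simp only [sub_re, natCast_re, hn, mem_Icc]
    constructor <;> linarith [Nat.floor_le (zero_le_one.trans hre), Nat.lt_floor_add_one s.re]
  have hs' : s - n = ((s - n).re : ℂ) + t * I := by apply ext <;> simp [hs]
  calc m * n ! ≤ n ! * ‖Gamma (s - n)‖ := by
        rw [mul_comm]; gcongr; rw [hs']; exact hmin _ hw
    _ ≤ ‖Gamma (s - n + n)‖ := factorial_mul_norm_Gamma_le_norm_Gamma_add hw.1 n
    _ = ‖Gamma s‖ := by rw [sub_add_cancel]

end Complex

lemma Nat.factorial_mul_factorial_mul_pow_le_factorial (a b d : ℕ) :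
    a ! * b ! * b ^ d ≤ (a + b + d)! :=
  calc a ! * b ! * b ^ d ≤ (a + b)! * (a + b + 1) ^ d :=
        Nat.mul_le_mul
          (Nat.le_of_dvd (Nat.factorial_pos _) (factorial_mul_factorial_dvd_factorial_add a b))
          (Nat.pow_le_pow_left (by omega) d)
    _ ≤ (a + b + d)! := factorial_mul_pow_le_factorial

lemma mul_pow_mul_pow_le_norm_Gamma_div {A B z : ℂ} {m : ℝ} {U r d : ℕ} (hm : 0 ≤ m)
    (hA : m * (U + r + d)! ≤ ‖Gamma A‖) (hB : ‖Gamma B‖ ≤ U !) (hB0 : Gamma B ≠ 0) :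
    m * (r ^ d * ‖z‖ ^ r) ≤ ‖Gamma A / Gamma B * z ^ r / (r ! : ℂ)‖ := by
  rw [norm_div, norm_mul, norm_div, norm_pow, norm_natCast, div_mul_eq_mul_div, div_div,
    le_div_iff₀ (by positivity)]
  calc m * (r ^ d * ‖z‖ ^ r) * (‖Gamma B‖ * r !) ≤ m * (r ^ d * ‖z‖ ^ r) * (U ! * r !) := by
        gcongr
    _ = m * (U ! * r ! * r ^ d : ℕ) * ‖z‖ ^ r := by push_cast; ring
    _ ≤ m * (U + r + d)! * ‖z‖ ^ r := by
        gcongr; exact_mod_cast Nat.factorial_mul_factorial_mul_pow_le_factorial U r d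
    _ ≤ ‖Gamma A‖ * ‖z‖ ^ r := by gcongr

lemma eventually_one_le_pow_mul_pow {ε y : ℝ} (hε : 0 < ε) (hy : 0 < y) :
    ∀ᶠ r : ℕ in atTop, ∀ d : ℕ, ε * r ≤ d → 1 ≤ (r : ℝ) ^ d * y ^ r := by
  have hgrow := ((tendsto_rpow_atTop hε).comp tendsto_natCast_atTop_atTop).atTop_mul_const hy
  filter_upwards [hgrow.eventually_ge_atTop 1, eventually_ge_atTop 1] with r hr hr1 d hd
  have hr1' : (1 : ℝ) ≤ r := by exact_mod_cast hr1
  calc 1 ≤ ((r : ℝ) ^ ε * y) ^ r := one_le_pow₀ hr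
    _ = (r : ℝ) ^ (ε * r) * y ^ r := by
        rw [mul_pow, ← Real.rpow_natCast ((r : ℝ) ^ ε), ← Real.rpow_mul (by positivity)]
    _ ≤ (r : ℝ) ^ d * y ^ r := by
        gcongr; rw [← Real.rpow_natCast]; exact Real.rpow_le_rpow_of_exponent_le hr1' hd

lemma eventually_le_const_mul_natCast (c : ℝ) {e : ℝ} (he : 0 < e) :
    ∀ᶠ r : ℕ in atTop, c ≤ e * r :=
  (tendsto_natCast_atTop_atTop.const_mul_atTop he).eventually_ge_atTop c

lemma eventually_natFloor_eq_natFloor_add {α β a b ε : ℝ} (hβ : 0 < β) (hε₀ : 0 ≤ ε)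
    (hε : ε < α - β - 1) :
    ∀ᶠ r : ℕ in atTop, 2 ≤ β * r + b ∧ 1 ≤ α * r + a ∧
      ∃ d : ℕ, ε * r ≤ d ∧ ⌊α * r + a⌋₊ - 1 = ⌊β * r + b⌋₊ + r + d := by
  filter_upwards [eventually_le_const_mul_natCast (2 - b) hβ,
    eventually_le_const_mul_natCast (b - a + 2) (sub_pos.mpr hε)] with r hB hgap
  have hr : (0 : ℝ) ≤ r := r.cast_nonneg
  have hεr : 0 ≤ ε * r := mul_nonneg hε₀ hr
  have hU : (⌊β * r + b⌋₊ : ℝ) ≤ β * r + b := Nat.floor_le (by linarith)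
  have hN : α * r + a < ⌊α * r + a⌋₊ + 1 := Nat.lt_floor_add_one _
  have hle : ⌊β * r + b⌋₊ + r + 1 ≤ ⌊α * r + a⌋₊ := by
    exact_mod_cast (by linarith : (⌊β * r + b⌋₊ + r + 1 : ℝ) ≤ ⌊α * r + a⌋₊)
  obtain ⟨d, hd⟩ := Nat.exists_eq_add_of_le hle
  have hdR : (⌊α * r + a⌋₊ : ℝ) = ⌊β * r + b⌋₊ + r + 1 + d := by exact_mod_cast hd
  exact ⟨by linarith, by linarith, d, by linarith, by omega⟩

noncomputable def wrightTerm (α β : ℝ) (a b z : ℂ) (r : ℕ) : ℂ :=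
  Gamma ((α * r : ℝ) + a) / Gamma ((β * r : ℝ) + b) * z ^ r / (r ! : ℂ)

lemma exists_pos_eventually_le_norm_wrightTerm {α β : ℝ} (a b : ℂ) {z : ℂ} (hβ : 0 < β)
    (hκ : 1 + β - α < 0) (hz : z ≠ 0) :
    ∃ m > 0, ∀ᶠ r in atTop, m ≤ ‖wrightTerm α β a b z r‖ := by
  obtain ⟨m, hm, hΓ⟩ := exists_pos_mul_factorial_le_norm_Gamma a.im
  have hε : 0 < (α - β - 1) / 2 := by linarith
  refine ⟨m, hm, ?_⟩
  filter_upwards [eventually_natFloor_eq_natFloor_add (α := α) (a := a.re) (b := b.re) hβ hε.le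
      (by linarith), eventually_one_le_pow_mul_pow hε (norm_pos_iff.mpr hz)]
    with r ⟨hB, hA, d, hd, hN⟩ hpow
  have hAre : (((α * r : ℝ) : ℂ) + a).re = α * r + a.re := by simp
  have hBre : (((β * r : ℝ) : ℂ) + b).re = β * r + b.re := by simp
  have hΓA := hΓ _ (by simp) (hAre ▸ hA)
  rw [hAre, hN] at hΓA
  have hΓB := norm_Gamma_le_factorial_natFloor (hBre ▸ hB)
  rw [hBre] at hΓB
  calc m ≤ m * (r ^ d * ‖z‖ ^ r) := le_mul_of_one_le_right hm.le (hpow d hd)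
    _ ≤ ‖wrightTerm α β a b z r‖ := mul_pow_mul_pow_le_norm_Gamma_div hm.le hΓA hΓB
        (Gamma_ne_zero_of_re_pos (by rw [hBre]; linarith))

lemma not_tendsto_wrightTerm_zero {α β : ℝ} (a b : ℂ) {z : ℂ} (hβ : 0 < β)
    (hκ : 1 + β - α < 0) (hz : z ≠ 0) :
    ¬ Tendsto (wrightTerm α β a b z) atTop (nhds 0) := by
  obtain ⟨m, hm, hle⟩ := exists_pos_eventually_le_norm_wrightTerm a b hβ hκ hz
  intro h
  obtain ⟨r, hmr, hlt⟩ :=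
    (hle.and ((tendsto_zero_iff_norm_tendsto_zero.mp h).eventually_lt_const hm)).exists
  exact hmr.not_gt hlt

theorem wright_divergent_of_kappa_neg_general (α β : ℝ) (a b : ℂ)
    (hβ : 0 < β) (hκ : 1 + β - α < 0) :
    ∀ z : ℂ, z ≠ 0 →
      ¬ Summable (fun r : ℕ =>
        Complex.Gamma ((α * r : ℝ) + a) / Complex.Gamma ((β * r : ℝ) + b) *
          z ^ r / (Nat.factorial r)) :=
  fun _ hz hsum => not_tendsto_wrightTerm_zero a b hβ hκ hz hsum.tendsto_atTop_zero

/-- If `κ = 1 + β - α < 0` with `α, β > 0`, the Wright series diverges for every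
nonzero complex `z`. -/
theorem wright_divergent_of_kappa_neg (α β : ℝ) (a b : ℂ)
    (hα : 0 < α) (hβ : 0 < β) (hκ : 1 + β - α < 0)
    (ha : ∀ r k : ℕ, (α * r : ℂ) + a ≠ -(k : ℂ)) :
    ∀ z : ℂ, z ≠ 0 →
      ¬ Summable (fun r : ℕ =>
        Complex.Gamma ((α * r : ℝ) + a) / Complex.Gamma ((β * r : ℝ) + b) *
          z ^ r / (Nat.factorial r)) :=
  wright_divergent_of_kappa_neg_general α β a b hβ hκ
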